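/- arXiv:1403.6756 — 2 statements merged into one kernel-verified Lean document; each statement's English description precedes it below -/
import Mathlib

section
/- Let (X, f, ε) be an exterior discrete semi-flow and suppose X is Lagrange stable at every point of PA(L̄(X)). Then PA(L̄(X)) \ WA(L̄(X) \ L(X)) ⊆ D̄(X). -/
open Set Topology

/-- The omega-limit set of a point `x` under the discrete semi-flow generated by `f`:
`Λ(x) = ⋂ₙ closure {f^[m] x : m ≥ n}`. -/
def Lambda {X : Type*} [TopologicalSpace X] (f : X → X) (x : X) : Set X :=
  ⋂ n : ℕ, closure ((fun m => f^[m] x) '' Set.Ici n)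

/-- The omega-limit set of a subset `S`: `Λ(S) = ⋃_{x ∈ S} Λ(x)`. -/
def LambdaSet {X : Type*} [TopologicalSpace X] (f : X → X) (S : Set X) : Set X :=
  ⋃ x ∈ S, Lambda f x

/-- The region of pseudo-attraction of `S`: `PA(S) = {x : Λ(x) ⊆ S}`. -/
def PA {X : Type*} [TopologicalSpace X] (f : X → X) (S : Set X) : Set X :=
  {x | Lambda f x ⊆ S}

/-- The region of weak-attraction of `S`: `WA(S) = {x : Λ(x) ∩ S ≠ ∅}`. -/
def WA {X : Type*} [TopologicalSpace X] (f : X → X) (S : Set X) : Set X :=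
  {x | (Lambda f x ∩ S).Nonempty}

/-- The region of attraction of `S`: `A(S) = {x : ∅ ≠ Λ(x) ⊆ S}`. -/
def RA {X : Type*} [TopologicalSpace X] (f : X → X) (S : Set X) : Set X :=
  {x | (Lambda f x).Nonempty ∧ Lambda f x ⊆ S}

/-- `X` is (positively) Lagrange stable at `x` if the closure of the trajectory of `x`
is compact. -/
def LagrangeStableAt {X : Type*} [TopologicalSpace X] (f : X → X) (x : X) : Prop :=
  IsCompact (closure (Set.range fun n : ℕ => f^[n] x))

/-- An externology on a topological space: a nonempty family of open sets closed under
finite intersections such that any open set containing a member belongs to the family. -/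
def IsExternology {X : Type*} [TopologicalSpace X] (ε : Set (Set X)) : Prop :=
  ε.Nonempty ∧ (∀ E ∈ ε, IsOpen E) ∧ (∀ E ∈ ε, ∀ F ∈ ε, E ∩ F ∈ ε) ∧
    (∀ E ∈ ε, ∀ U : Set X, IsOpen U → E ⊆ U → U ∈ ε)

/-- The limit space of an externology: `L(X) = ⋂_{E ∈ ε} E`. -/
def limitSpace {X : Type*} (ε : Set (Set X)) : Set X := ⋂ E ∈ ε, E

/-- The bar-limit space of an externology: `L̄(X) = ⋂_{E ∈ ε} closure E`. -/
def barLimit {X : Type*} [TopologicalSpace X] (ε : Set (Set X)) : Set X :=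
  ⋂ E ∈ ε, closure E

/-- The region of pseudo-attraction of the externology:
`D(X) = {x : ∀ E ∈ ε, f^[m] x ∈ E for all large m}`. -/
def Dregion {X : Type*} (f : X → X) (ε : Set (Set X)) : Set X :=
  {x | ∀ E ∈ ε, ∃ n : ℕ, ∀ m ≥ n, f^[m] x ∈ E}

/-- The region of pseudo-bar-attraction of the externology:
`D̄(X) = {x : ∀ E ∈ ε, f^[m] x ∈ closure E for all large m}`. -/
def Dbar {X : Type*} [TopologicalSpace X] (f : X → X) (ε : Set (Set X)) : Set X :=
  {x | ∀ E ∈ ε, ∃ n : ℕ, ∀ m ≥ n, f^[m] x ∈ closure E}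

/-- A right-absorbing open subset: an open set that eventually contains the trajectory
of every point. -/
def RightAbsorbing {X : Type*} [TopologicalSpace X] (f : X → X) (E : Set X) : Prop :=
  IsOpen E ∧ ∀ y : X, ∃ n : ℕ, ∀ m ≥ n, f^[m] y ∈ E

/-- A point `x` is periodic if `f^[n] x = x` for some `n ≥ 1`. -/
def IsPeriodicPoint {X : Type*} (f : X → X) (x : X) : Prop := ∃ n ≥ 1, f^[n] x = x

/-! An orbit whose closure is compact is eventually trapped in every open neighbourhood of its
ω-limit set. For `x ∈ PA(L̄(X)) \ WA(L̄(X) \ L(X))` the ω-limit set lies in `L(X)`, hence in every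
`E ∈ ε`; as `E` is open, the orbit of `x` eventually enters `E ⊆ closure E`. -/

open Filter
open scoped omegaLimit

theorem Lambda_eq_omegaLimit {X : Type*} [TopologicalSpace X] (f : X → X) (x : X) :
    Lambda f x = ω atTop (fun n y => f^[n] y) {x} := by
  simp only [Lambda, omegaLimit_def, image2_singleton_right]
  refine Subset.antisymm (fun y hy => mem_iInter₂.2 fun u hu => ?_)
    (fun y hy => mem_iInter.2 fun n => mem_iInter₂.1 hy _ (Ici_mem_atTop n))
  obtain ⟨n, hn⟩ := mem_atTop_sets.1 hu
  exact closure_mono (image_mono fun m hm => hn m hm) (mem_iInter.1 hy n)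

theorem LagrangeStableAt.eventually_mem_of_Lambda_subset {X : Type*} [TopologicalSpace X]
    {f : X → X} {x : X} (hx : LagrangeStableAt f x) {U : Set X} (hU : IsOpen U)
    (hΛ : Lambda f x ⊆ U) : ∀ᶠ n in atTop, f^[n] x ∈ U := by
  rw [Lambda_eq_omegaLimit] at hΛ
  have horbit : closure (image2 (fun n y => f^[n] y) univ {x}) ⊆
      closure (range fun n : ℕ => f^[n] x) := by
    rw [image2_singleton_right, image_univ]
  obtain ⟨u, hu, huU⟩ :=
    eventually_closure_subset_of_isCompact_absorbing_of_isOpen_of_omegaLimit_subset' _ _ _ hx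
      ⟨univ, univ_mem, horbit⟩ hU hΛ
  exact mem_of_superset hu fun n hn => huU (subset_closure (mem_image2_of_mem hn rfl))

theorem PA_diff_WA_diff_subset_PA {X : Type*} [TopologicalSpace X] (f : X → X) (S T : Set X) :
    PA f S \ WA f (S \ T) ⊆ PA f T := by
  rintro x ⟨hPA, hWA⟩ y hy
  by_contra hyT
  exact hWA ⟨y, hy, hPA hy, hyT⟩

theorem stmt11_general {X : Type*} [TopologicalSpace X] (f : X → X)
    (ε : Set (Set X)) (hε : IsExternology ε)
    (hL : ∀ x ∈ PA f (barLimit ε), LagrangeStableAt f x) :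
    PA f (barLimit ε) \ WA f (barLimit ε \ limitSpace ε) ⊆ Dbar f ε := by
  intro x hx E hE
  have hΛ : Lambda f x ⊆ E :=
    (PA_diff_WA_diff_subset_PA f _ _ hx).trans (biInter_subset_of_mem hE)
  obtain ⟨N, hN⟩ :=
    eventually_atTop.1 ((hL x hx.1).eventually_mem_of_Lambda_subset (hε.2.1 E hE) hΛ)
  exact ⟨N, fun m hm => subset_closure (hN m hm)⟩

theorem stmt11 {X : Type*} [TopologicalSpace X] (f : X → X) (hf : Continuous f)
    (ε : Set (Set X)) (hε : IsExternology ε) (hflow : ∀ E ∈ ε, f ⁻¹' E ∈ ε)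
    (hL : ∀ x ∈ PA f (barLimit ε), LagrangeStableAt f x) :
    PA f (barLimit ε) \ WA f (barLimit ε \ limitSpace ε) ⊆ Dbar f ε :=
  stmt11_general f ε hε hL
end

section
/- Let X be a locally compact regular topological space and f : X → X a continuous map. Then L̄(X^r) = closure(Λ(X)), i.e., the intersection of the closures of all right-absorbing open subsets of X equals the closure of the union of all omega-limit sets. -/
open Set Topology

/-!
A point of `Λ(y)` lies in the closure of a tail of the trajectory of `y`, so it lies in the closure
of every right-absorbing set. Conversely, if `x ∉ closure Λ(X)`, local compactness and regularity
give a compact closed neighbourhood `L` of `x` missing every `Λ(y)`; by compactness no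
trajectory can return to `L` infinitely often, so `Lᶜ` is right-absorbing, and
`x ∉ closure Lᶜ`.
-/

open Filter

section OmegaLimit

variable {X : Type*} [TopologicalSpace X] {f : X → X} {y : X}

theorem mem_Lambda_iff_mapClusterPt {z : X} :
    z ∈ Lambda f y ↔ MapClusterPt z atTop (fun m => f^[m] y) := by
  rw [mapClusterPt_atTop_iff_forall_mem_closure, Lambda, mem_iInter]

theorem Lambda_subset_closure_of_eventually_mem {E : Set X}
    (hE : ∃ n : ℕ, ∀ m ≥ n, f^[m] y ∈ E) : Lambda f y ⊆ closure E := by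
  obtain ⟨n, hn⟩ := hE
  refine (iInter_subset _ n).trans (closure_mono ?_)
  rintro _ ⟨m, hm, rfl⟩
  exact hn m hm

theorem eventually_notMem_of_isCompact_of_disjoint_Lambda {K : Set X} (hK : IsCompact K)
    (hdisj : Disjoint (Lambda f y) K) : ∀ᶠ m in atTop, f^[m] y ∉ K := by
  by_contra hfreq
  simp only [not_eventually, not_not] at hfreq
  obtain ⟨z, hzK, hz⟩ := hK.exists_mapClusterPt_of_frequently hfreq
  exact hdisj.notMem_of_mem_right hzK (mem_Lambda_iff_mapClusterPt.mpr hz)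

theorem rightAbsorbing_compl_of_isCompact_of_disjoint {K : Set X} (hK : IsCompact K)
    (hK' : IsClosed K) (hdisj : Disjoint (LambdaSet f univ) K) : RightAbsorbing f Kᶜ := by
  refine ⟨hK'.isOpen_compl, fun y => eventually_atTop.mp ?_⟩
  refine eventually_notMem_of_isCompact_of_disjoint_Lambda hK (hdisj.mono_left ?_)
  exact subset_biUnion_of_mem (u := Lambda f) (mem_univ y)

theorem LambdaSet_subset_closure_of_rightAbsorbing {E : Set X} (hE : RightAbsorbing f E) :
    LambdaSet f univ ⊆ closure E :=
  iUnion₂_subset fun y _ => Lambda_subset_closure_of_eventually_mem (hE.2 y)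

end OmegaLimit

theorem stmt19_general {X : Type*} [TopologicalSpace X] [LocallyCompactSpace X] [RegularSpace X]
    (f : X → X) :
    (⋂ E ∈ {E : Set X | RightAbsorbing f E}, closure E)
      = closure (LambdaSet f (Set.univ : Set X)) := by
  refine Subset.antisymm (fun x hx => ?_) <|
    closure_minimal (subset_iInter₂ fun E hE => LambdaSet_subset_closure_of_rightAbsorbing hE)
      (isClosed_biInter fun _ _ => isClosed_closure)
  by_contra hxΛ
  obtain ⟨L, hLcomp, hLclosed, hxL, hLΛ⟩ :=
    exists_compact_closed_between isCompact_singleton isClosed_closure.isOpen_compl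
      (singleton_subset_iff.mpr hxΛ)
  have hE : RightAbsorbing f Lᶜ := rightAbsorbing_compl_of_isCompact_of_disjoint hLcomp hLclosed
    (disjoint_compl_right.mono subset_closure hLΛ)
  have hx_closure : x ∈ closure Lᶜ := mem_iInter₂.mp hx _ hE
  rw [closure_compl] at hx_closure
  exact hx_closure (singleton_subset_iff.mp hxL)

theorem stmt19 {X : Type*} [TopologicalSpace X] [LocallyCompactSpace X] [RegularSpace X]
    (f : X → X) (hf : Continuous f) :
    (⋂ E ∈ {E : Set X | RightAbsorbing f E}, closure E)
      = closure (LambdaSet f (Set.univ : Set X)) :=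
  stmt19_general f
end
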